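/- For the superposition trawl, the (possibly infinite) integral of the overlap area satisfies ∫_0^∞ leb(A_t ∩ A) dt = (1 − b)·∫_0^∞ λ^{−2} π(dλ), as an equality in [0, ∞]. Consequently, the integrated autocorrelation ∫_0^∞ leb(A_t ∩ A)/leb(A) dt equals (∫_0^∞ λ^{−2} π(dλ)) / (∫_0^∞ λ^{−1} π(dλ)), and it is finite if and only if ∫_0^∞ λ^{−2} π(dλ) < ∞. -/

import Mathlib

/-!
Since the superposition trawl function `d` is nondecreasing on `(-∞, 0]`, the overlap
`A_t ∩ A` is the region under the graph of `s ↦ d(s - t)` over `s ≤ 0`, of area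
`∫_{s ≤ 0} (d(s - t) - b) ds = (1 - b) ∫ e^{-λt} λ⁻¹ π(dλ)` by Tonelli. Integrating once more in
`t > 0` and using Tonelli again gives `(1 - b) ∫ λ⁻² π(dλ)`, while `t = 0` gives
`leb(A) = (1 - b) ∫ λ⁻¹ π(dλ)`, which is finite and positive; the ratio of the two is the claim.
-/

open MeasureTheory Set Filter

theorem volume_setOf_fst_mem_Ico_of_snd_mem {S : Set ℝ} (hS : MeasurableSet S) {g : ℝ → ℝ}
    (hg : Measurable g) (b : ℝ) :
    volume {p : ℝ × ℝ | p.2 ∈ S ∧ p.1 ∈ Ico b (g p.2)} = ∫⁻ s in S, ENNReal.ofReal (g s - b) := by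
  have hms : MeasurableSet {p : ℝ × ℝ | p.2 ∈ S ∧ p.1 ∈ Ico b (g p.2)} :=
    (measurable_snd hS).inter ((measurableSet_le measurable_const measurable_fst).inter
      (measurableSet_lt measurable_fst (hg.comp measurable_snd)))
  rw [Measure.volume_eq_prod, Measure.prod_apply_symm hms, ← lintegral_indicator hS]
  congr 1 with s
  by_cases hs : s ∈ S
  · have hslice : (fun x => (x, s)) ⁻¹' {p : ℝ × ℝ | p.2 ∈ S ∧ p.1 ∈ Ico b (g p.2)}
        = Ico b (g s) := by
      ext x
      simp [hs]
    rw [indicator_of_mem hs, hslice, Real.volume_Ico]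
  · simp [hs]

theorem lintegral_Iic_ofReal_exp_mul {l : ℝ} (hl : 0 < l) :
    ∫⁻ s in Iic 0, ENNReal.ofReal (Real.exp (l * s)) = ENNReal.ofReal (1 / l) := by
  rw [← ofReal_integral_eq_lintegral_ofReal (integrableOn_exp_mul_Iic hl 0)
    (.of_forall fun _ => (Real.exp_pos _).le), integral_exp_mul_Iic hl, mul_zero, Real.exp_zero]

theorem lintegral_Ioi_ofReal_exp_neg_mul {l : ℝ} (hl : 0 < l) :
    ∫⁻ t in Ioi 0, ENNReal.ofReal (Real.exp (-l * t)) = ENNReal.ofReal (1 / l) := by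
  rw [← ofReal_integral_eq_lintegral_ofReal (integrableOn_exp_mul_Ioi (neg_lt_zero.2 hl) 0)
    (.of_forall fun _ => (Real.exp_pos _).le), integral_exp_mul_Ioi (neg_lt_zero.2 hl),
    mul_zero, Real.exp_zero, neg_div_neg_eq]

section Laplace

variable {π : Measure ℝ}

theorem integrable_exp_mul_of_nonpos [IsFiniteMeasure π] (hπ : ∀ᵐ l ∂π, 0 ≤ l) {s : ℝ}
    (hs : s ≤ 0) : Integrable (fun l => Real.exp (l * s)) π := by
  refine (integrable_const 1).mono' (by fun_prop) ?_
  filter_upwards [hπ] with l hl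
  rw [Real.norm_of_nonneg (Real.exp_pos _).le, Real.exp_le_one_iff]
  exact mul_nonpos_of_nonneg_of_nonpos hl hs

theorem monotoneOn_integral_exp_mul [IsFiniteMeasure π] (hπ : ∀ᵐ l ∂π, 0 ≤ l) :
    MonotoneOn (fun s => ∫ l, Real.exp (l * s) ∂π) (Iic 0) := fun s hs s' hs' hss' =>
  integral_mono_ae (integrable_exp_mul_of_nonpos hπ hs) (integrable_exp_mul_of_nonpos hπ hs')
    (by filter_upwards [hπ] with l hl using Real.exp_le_exp.2 (mul_le_mul_of_nonneg_left hss' hl))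

theorem measurable_integral_exp_mul [SFinite π] : Measurable fun s => ∫ l, Real.exp (l * s) ∂π :=
  (show StronglyMeasurable fun p : ℝ × ℝ => Real.exp (p.2 * p.1) by
    fun_prop).integral_prod_right'.measurable

theorem lintegral_ofReal_one_div_ne_zero [NeZero π] (hπ : ∀ᵐ l ∂π, 0 < l) :
    ∫⁻ l, ENNReal.ofReal (1 / l) ∂π ≠ 0 := by
  rw [Ne, lintegral_eq_zero_iff (by fun_prop)]
  intro hzero
  obtain ⟨l, hl, hl0⟩ := (hπ.and hzero).exists
  simp only [Pi.zero_apply, ENNReal.ofReal_eq_zero] at hl0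
  exact (one_div_pos.2 hl).not_ge hl0

end Laplace

def trawlSet (b : ℝ) (d : ℝ → ℝ) (t : ℝ) : Set (ℝ × ℝ) :=
  {p | p.2 ≤ t ∧ b ≤ p.1 ∧ p.1 < d (p.2 - t)}

section Trawl

variable {b : ℝ} {d : ℝ → ℝ} {t : ℝ}

theorem trawlSet_inter_trawlSet_zero (hd : MonotoneOn d (Iic 0)) (ht : 0 ≤ t) :
    trawlSet b d t ∩ trawlSet b d 0 = {p | p.2 ∈ Iic 0 ∧ p.1 ∈ Ico b (d (p.2 - t))} := by
  ext ⟨x, s⟩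
  simp only [trawlSet, mem_inter_iff, mem_ofPred_eq, mem_Iic, mem_Ico, sub_zero]
  constructor
  · rintro ⟨⟨-, hbx, hx⟩, hs, -⟩
    exact ⟨hs, hbx, hx⟩
  · rintro ⟨hs, hbx, hx⟩
    have hst : s - t ∈ Iic 0 := mem_Iic.2 (by linarith)
    exact ⟨⟨hs.trans ht, hbx, hx⟩, hs, hbx, hx.trans_le (hd hst hs (by linarith))⟩

theorem volume_trawlSet_inter_trawlSet_zero (hdm : Measurable d) (hd : MonotoneOn d (Iic 0))
    (ht : 0 ≤ t) :
    volume (trawlSet b d t ∩ trawlSet b d 0) = ∫⁻ s in Iic 0, ENNReal.ofReal (d (s - t) - b) := by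
  rw [trawlSet_inter_trawlSet_zero hd ht]
  exact volume_setOf_fst_mem_Ico_of_snd_mem measurableSet_Iic (hdm.comp (measurable_sub_const t)) b

end Trawl

noncomputable def superpositionTrawlFn (b : ℝ) (π : Measure ℝ) (s : ℝ) : ℝ :=
  b + (1 - b) * ∫ l, Real.exp (l * s) ∂π

theorem measurable_superpositionTrawlFn {b : ℝ} {π : Measure ℝ} [SFinite π] :
    Measurable (superpositionTrawlFn b π) :=
  measurable_const.add (measurable_const.mul measurable_integral_exp_mul)

section Superposition

variable {b : ℝ} {π : Measure ℝ} [IsFiniteMeasure π]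

theorem monotoneOn_superpositionTrawlFn (hb : b ≤ 1) (hπ : ∀ᵐ l ∂π, 0 ≤ l) :
    MonotoneOn (superpositionTrawlFn b π) (Iic 0) := fun s hs s' hs' hss' => by
  simp only [superpositionTrawlFn]
  exact add_le_add_right
    (mul_le_mul_of_nonneg_left (monotoneOn_integral_exp_mul hπ hs hs' hss') (sub_nonneg.2 hb)) b

theorem ofReal_superpositionTrawlFn_sub (hb : b ≤ 1) (hπ : ∀ᵐ l ∂π, 0 ≤ l) {s : ℝ}
    (hs : s ≤ 0) :
    ENNReal.ofReal (superpositionTrawlFn b π s - b)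
      = ENNReal.ofReal (1 - b) * ∫⁻ l, ENNReal.ofReal (Real.exp (l * s)) ∂π := by
  rw [superpositionTrawlFn, add_sub_cancel_left, ENNReal.ofReal_mul (by linarith),
    ofReal_integral_eq_lintegral_ofReal (integrable_exp_mul_of_nonpos hπ hs)
      (.of_forall fun _ => (Real.exp_pos _).le)]

theorem volume_superpositionTrawl_inter (hb : b ≤ 1) (hπ : ∀ᵐ l ∂π, 0 < l) {t : ℝ}
    (ht : 0 ≤ t) :
    volume (trawlSet b (superpositionTrawlFn b π) t ∩ trawlSet b (superpositionTrawlFn b π) 0)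
      = ENNReal.ofReal (1 - b)
          * ∫⁻ l, ENNReal.ofReal (Real.exp (-l * t)) * ENNReal.ofReal (1 / l) ∂π := by
  have hπ' : ∀ᵐ l ∂π, 0 ≤ l := hπ.mono fun _ => le_of_lt
  rw [volume_trawlSet_inter_trawlSet_zero measurable_superpositionTrawlFn
    (monotoneOn_superpositionTrawlFn hb hπ') ht]
  calc ∫⁻ s in Iic 0, ENNReal.ofReal (superpositionTrawlFn b π (s - t) - b)
      = ∫⁻ s in Iic 0, ENNReal.ofReal (1 - b) * ∫⁻ l, ENNReal.ofReal (Real.exp (l * (s - t))) ∂π :=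
        setLIntegral_congr_fun measurableSet_Iic fun s hs =>
          ofReal_superpositionTrawlFn_sub hb hπ' (by linarith [mem_Iic.1 hs])
    _ = ENNReal.ofReal (1 - b)
          * ∫⁻ l, (∫⁻ s in Iic 0, ENNReal.ofReal (Real.exp (l * (s - t)))) ∂π := by
        rw [lintegral_const_mul' _ _ ENNReal.ofReal_ne_top, lintegral_lintegral_swap (by fun_prop)]
    _ = _ := by
        congr 1
        refine lintegral_congr_ae ?_
        filter_upwards [hπ] with l hl
        simp_rw [show ∀ s, l * (s - t) = -l * t + l * s by intro s; ring, Real.exp_add,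
          ENNReal.ofReal_mul (Real.exp_pos _).le]
        rw [lintegral_const_mul' _ _ ENNReal.ofReal_ne_top, lintegral_Iic_ofReal_exp_mul hl]

theorem volume_superpositionTrawl (hb : b ≤ 1) (hπ : ∀ᵐ l ∂π, 0 < l) :
    volume (trawlSet b (superpositionTrawlFn b π) 0)
      = ENNReal.ofReal (1 - b) * ∫⁻ l, ENNReal.ofReal (1 / l) ∂π := by
  simpa using volume_superpositionTrawl_inter hb hπ le_rfl

theorem lintegral_volume_superpositionTrawl_inter (hb : b ≤ 1) (hπ : ∀ᵐ l ∂π, 0 < l) :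
    ∫⁻ t in Ioi 0,
        volume (trawlSet b (superpositionTrawlFn b π) t ∩ trawlSet b (superpositionTrawlFn b π) 0)
      = ENNReal.ofReal (1 - b) * ∫⁻ l, ENNReal.ofReal (1 / l ^ 2) ∂π := by
  rw [setLIntegral_congr_fun measurableSet_Ioi fun t ht =>
      volume_superpositionTrawl_inter hb hπ (le_of_lt ht),
    lintegral_const_mul' _ _ ENNReal.ofReal_ne_top, lintegral_lintegral_swap (by fun_prop)]
  congr 1
  refine lintegral_congr_ae ?_
  filter_upwards [hπ] with l hl
  rw [lintegral_mul_const' _ _ ENNReal.ofReal_ne_top, lintegral_Ioi_ofReal_exp_neg_mul hl,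
    ← ENNReal.ofReal_mul (by positivity), one_div_mul_one_div, sq]

end Superposition

/-- For the superposition trawl, as an identity in `[0,∞]`,
`∫_0^∞ leb(A_t ∩ A) dt = (1 − b)·∫ λ⁻² π(dλ)`; consequently the integrated autocorrelation
`∫_0^∞ leb(A_t ∩ A)/leb(A) dt` equals `(∫ λ⁻² π(dλ))/(∫ λ⁻¹ π(dλ))`, and it is finite if
and only if `∫ λ⁻² π(dλ) < ∞`. -/
theorem superposition_trawl_integrated_autocorrelation
    (b : ℝ) (hb : b ∈ Set.Ico (0:ℝ) 1)
    (π : Measure ℝ) [IsProbabilityMeasure π]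
    (hπ0 : π (Set.Iic 0) = 0)
    (hπint : MeasureTheory.Integrable (fun l => l⁻¹) π)
    (d : ℝ → ℝ)
    (hd : ∀ s : ℝ, d s = b + (1 - b) * ∫ l, Real.exp (l * s) ∂π)
    (A : ℝ → Set (ℝ × ℝ))
    (hA : ∀ t, A t = {p : ℝ × ℝ | p.2 ≤ t ∧ b ≤ p.1 ∧ p.1 < d (p.2 - t)}) :
    (∫⁻ t in Set.Ioi (0:ℝ), volume (A t ∩ A 0)
        = ENNReal.ofReal (1 - b) * ∫⁻ l, ENNReal.ofReal (1 / l ^ 2) ∂π) ∧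
    (∫⁻ t in Set.Ioi (0:ℝ), volume (A t ∩ A 0) / volume (A 0)
        = (∫⁻ l, ENNReal.ofReal (1 / l ^ 2) ∂π) / (∫⁻ l, ENNReal.ofReal (1 / l) ∂π)) ∧
    ((∫⁻ t in Set.Ioi (0:ℝ), volume (A t ∩ A 0) / volume (A 0)) < ⊤ ↔
      (∫⁻ l, ENNReal.ofReal (1 / l ^ 2) ∂π) < ⊤) := by
  have hb1 : b ≤ 1 := hb.2.le
  have hπ : ∀ᵐ l ∂π, 0 < l := ae_iff.2 (measure_mono_null (fun _ => not_lt.1) hπ0)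
  obtain rfl : d = superpositionTrawlFn b π := funext hd
  have hA' : A = trawlSet b (superpositionTrawlFn b π) := funext hA
  have hvol : volume (A 0) = ENNReal.ofReal (1 - b) * ∫⁻ l, ENNReal.ofReal (1 / l) ∂π := by
    rw [hA', volume_superpositionTrawl hb1 hπ]
  have hoverlap : ∫⁻ t in Ioi 0, volume (A t ∩ A 0)
      = ENNReal.ofReal (1 - b) * ∫⁻ l, ENNReal.ofReal (1 / l ^ 2) ∂π := by
    rw [hA', lintegral_volume_superpositionTrawl_inter hb1 hπ]
  have hβ : ENNReal.ofReal (1 - b) ≠ 0 := by simpa using hb.2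
  have hc1_ne_zero : ∫⁻ l, ENNReal.ofReal (1 / l) ∂π ≠ 0 := lintegral_ofReal_one_div_ne_zero hπ
  have hc1_ne_top : ∫⁻ l, ENNReal.ofReal (1 / l) ∂π ≠ ⊤ := by
    simpa only [one_div] using hπint.lintegral_lt_top.ne
  have hratio : ∫⁻ t in Ioi 0, volume (A t ∩ A 0) / volume (A 0)
      = (∫⁻ l, ENNReal.ofReal (1 / l ^ 2) ∂π) / ∫⁻ l, ENNReal.ofReal (1 / l) ∂π := by
    simp only [div_eq_mul_inv (volume _), hvol]
    rw [lintegral_mul_const' _ _ (ENNReal.inv_ne_top.2 (mul_ne_zero hβ hc1_ne_zero)), hoverlap,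
      ← div_eq_mul_inv, ENNReal.mul_div_mul_left _ _ hβ ENNReal.ofReal_ne_top]
  refine ⟨hoverlap, hratio, ?_⟩
  rw [hratio, lt_top_iff_ne_top, lt_top_iff_ne_top, Ne, Ne, ENNReal.div_eq_top]
  simp only [hc1_ne_zero, hc1_ne_top, and_false, false_or, ne_eq, not_false_eq_true, and_true]
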